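/- arXiv:1710.03732 — 4 statements merged into one kernel-verified Lean document; each statement's English description precedes it below -/
import Mathlib

section
/- Let n ≥ 1 and let x : Fin n → Fin n → ℝ take values in {0,1} and satisfy the assignment constraints ∑_p x i p = 1 for all i and ∑_i x i p = 1 for all p. Define y i j p q := x i p * x j q for all i ≠ j and p ≠ q. Then y satisfies all the RLT1 constraints: (i) ∑_{q ≠ p} y i j p q = x i p for all i ≠ j and all p; (ii) ∑_{j ≠ i} y i j p q = x i p for all i and all p ≠ q; (iii) y i j p q = y j i q p for all i ≠ j, p ≠ q; (iv) y i j p q ≥ 0 for all i ≠ j, p ≠ q. Moreover, for any cost data b : Fin n → Fin n → ℝ and C : Fin n → Fin n → Fin n → Fin n → ℝ, the RLT1 objective ∑_i ∑_p b i p * x i p + ∑_i ∑_{j ≠ i} ∑_p ∑_{q ≠ p} C i j p q * y i j p q equals the QAP objective ∑_i ∑_p b i p * x i p + ∑_i ∑_{j ≠ i} ∑_p ∑_{q ≠ p} C i j p q * x i p * x j q. -/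
open Finset

/-- If `x` is a binary assignment matrix and `y i j p q := x i p * x j q`
(for `i ≠ j`, `p ≠ q`), then `y` satisfies all the RLT1 constraints, and the RLT1
objective of `(x, y)` equals the QAP objective of `x` for any cost data. -/
theorem rlt1_of_qap (n : ℕ) (hn : 1 ≤ n) (x : Fin n → Fin n → ℝ)
    (hx01 : ∀ i p, x i p = 0 ∨ x i p = 1)
    (hrow : ∀ i, ∑ p, x i p = 1)
    (hcol : ∀ p, ∑ i, x i p = 1)
    (y : Fin n → Fin n → Fin n → Fin n → ℝ)
    (hy : ∀ i j p q, i ≠ j → p ≠ q → y i j p q = x i p * x j q) :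
    (∀ i j p, i ≠ j →
      ∑ q ∈ univ.filter (fun q => q ≠ p), y i j p q = x i p) ∧
    (∀ i p q, p ≠ q →
      ∑ j ∈ univ.filter (fun j => j ≠ i), y i j p q = x i p) ∧
    (∀ i j p q, i ≠ j → p ≠ q → y i j p q = y j i q p) ∧
    (∀ i j p q, i ≠ j → p ≠ q → 0 ≤ y i j p q) ∧
    (∀ (b : Fin n → Fin n → ℝ) (C : Fin n → Fin n → Fin n → Fin n → ℝ),
      (∑ i, ∑ p, b i p * x i p)
        + ∑ i, ∑ j ∈ univ.filter (fun j => j ≠ i),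
            ∑ p, ∑ q ∈ univ.filter (fun q => q ≠ p), C i j p q * y i j p q
      = (∑ i, ∑ p, b i p * x i p)
        + ∑ i, ∑ j ∈ univ.filter (fun j => j ≠ i),
            ∑ p, ∑ q ∈ univ.filter (fun q => q ≠ p),
              C i j p q * (x i p * x j q)) := by
  have hnn : ∀ i p, (0:ℝ) ≤ x i p := by
    intro i p; rcases hx01 i p with h | h <;> simp [h]
  -- same row, two positions: product is 0
  have hrow0 : ∀ i p q, p ≠ q → x i p * x i q = 0 := by
    intro i p q hpq
    rcases hx01 i p with h | h
    · simp [h]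
    rcases hx01 i q with h' | h'
    · simp [h']
    exfalso
    have hsub : ({p, q} : Finset (Fin n)) ⊆ univ := subset_univ _
    have h2 : ∑ r ∈ ({p, q} : Finset (Fin n)), x i r ≤ ∑ r, x i r :=
      Finset.sum_le_sum_of_subset_of_nonneg hsub (fun r _ _ => hnn i r)
    rw [Finset.sum_pair hpq, hrow i, h, h'] at h2
    linarith
  have hcol0 : ∀ i j p, i ≠ j → x i p * x j p = 0 := by
    intro i j p hij
    rcases hx01 i p with h | h
    · simp [h]
    rcases hx01 j p with h' | h'
    · simp [h']
    exfalso
    have hsub : ({i, j} : Finset (Fin n)) ⊆ univ := subset_univ _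
    have h2 : ∑ k ∈ ({i, j} : Finset (Fin n)), x k p ≤ ∑ k, x k p :=
      Finset.sum_le_sum_of_subset_of_nonneg hsub (fun k _ _ => hnn k p)
    rw [Finset.sum_pair hij, hcol p, h, h'] at h2
    linarith
  refine ⟨?_, ?_, ?_, ?_, ?_⟩
  · intro i j p hij
    have h1 : ∑ q ∈ univ.filter (fun q => q ≠ p), y i j p q
        = ∑ q ∈ univ.filter (fun q => q ≠ p), x i p * x j q :=
      Finset.sum_congr rfl fun q hq =>
        hy i j p q hij ((Finset.mem_filter.mp hq).2).symm
    rw [h1, ← Finset.mul_sum, Finset.filter_ne', Finset.sum_erase_eq_sub (mem_univ p),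
      hrow j, mul_sub, mul_one, hcol0 i j p hij, sub_zero]
  · intro i p q hpq
    have h1 : ∑ j ∈ univ.filter (fun j => j ≠ i), y i j p q
        = ∑ j ∈ univ.filter (fun j => j ≠ i), x i p * x j q :=
      Finset.sum_congr rfl fun j hj =>
        hy i j p q ((Finset.mem_filter.mp hj).2).symm hpq
    rw [h1, ← Finset.mul_sum, Finset.filter_ne', Finset.sum_erase_eq_sub (mem_univ i),
      hcol q, mul_sub, mul_one, hrow0 i p q hpq, sub_zero]
  · intro i j p q hij hpq
    rw [hy i j p q hij hpq, hy j i q p hij.symm hpq.symm, mul_comm]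
  · intro i j p q hij hpq
    rw [hy i j p q hij hpq]
    exact mul_nonneg (hnn i p) (hnn j q)
  · intro b C
    congr 1
    refine Finset.sum_congr rfl fun i _ => Finset.sum_congr rfl fun j hj =>
      Finset.sum_congr rfl fun p _ => Finset.sum_congr rfl fun q hq => ?_
    rw [hy i j p q ((Finset.mem_filter.mp hj).2).symm ((Finset.mem_filter.mp hq).2).symm]
end

section
/- Let n ≥ 1 and let x : Fin n → Fin n → ℝ take values in {0,1} and satisfy the assignment constraints ∑_p x i p = 1 for all i and ∑_i x i p = 1 for all p. Suppose y : Fin n → Fin n → Fin n → Fin n → ℝ satisfies the RLT1 constraints: ∑_{q ≠ p} y i j p q = x i p for all (i ≠ j, p); ∑_{j ≠ i} y i j p q = x i p for all (i, p ≠ q); y i j p q = y j i q p for all (i ≠ j, p ≠ q); and y i j p q ≥ 0 for all i ≠ j, p ≠ q. Then y i j p q = x i p * x j q for all i ≠ j and p ≠ q; in particular, for any cost data the RLT1 objective value of (x, y) equals the QAP objective value of x. -/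
open Finset

/-- If `x` is a binary assignment matrix and `y` satisfies the RLT1
constraints, then `y i j p q = x i p * x j q` for all `i ≠ j`, `p ≠ q`; in particular,
for any cost data the RLT1 objective of `(x, y)` equals the QAP objective of `x`. -/
theorem qap_of_rlt1 (n : ℕ) (hn : 1 ≤ n) (x : Fin n → Fin n → ℝ)
    (hx01 : ∀ i p, x i p = 0 ∨ x i p = 1)
    (hrow : ∀ i, ∑ p, x i p = 1)
    (hcol : ∀ p, ∑ i, x i p = 1)
    (y : Fin n → Fin n → Fin n → Fin n → ℝ)
    (hy1 : ∀ i j p, i ≠ j →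
      ∑ q ∈ univ.filter (fun q => q ≠ p), y i j p q = x i p)
    (hy2 : ∀ i p q, p ≠ q →
      ∑ j ∈ univ.filter (fun j => j ≠ i), y i j p q = x i p)
    (hy3 : ∀ i j p q, i ≠ j → p ≠ q → y i j p q = y j i q p)
    (hy4 : ∀ i j p q, i ≠ j → p ≠ q → 0 ≤ y i j p q) :
    (∀ i j p q, i ≠ j → p ≠ q → y i j p q = x i p * x j q) ∧
    (∀ (b : Fin n → Fin n → ℝ) (C : Fin n → Fin n → Fin n → Fin n → ℝ),
      (∑ i, ∑ p, b i p * x i p)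
        + ∑ i, ∑ j ∈ univ.filter (fun j => j ≠ i),
            ∑ p, ∑ q ∈ univ.filter (fun q => q ≠ p), C i j p q * y i j p q
      = (∑ i, ∑ p, b i p * x i p)
        + ∑ i, ∑ j ∈ univ.filter (fun j => j ≠ i),
            ∑ p, ∑ q ∈ univ.filter (fun q => q ≠ p),
              C i j p q * (x i p * x j q)) := by
  -- zero lemma
  have hzero : ∀ i j p q, i ≠ j → q ≠ p → x i p = 0 → y i j p q = 0 := by
    intro i j p q hij hqp hx0
    have hsum := hy1 i j p hij
    rw [hx0] at hsum
    have := (Finset.sum_eq_zero_iff_of_nonneg (by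
      intro q' hq'
      exact hy4 i j p q' hij (Ne.symm (Finset.mem_filter.mp hq').2))).mp hsum
    exact this q (Finset.mem_filter.mpr ⟨Finset.mem_univ q, hqp⟩)
  have hone : ∀ j q q', x j q = 1 → q' ≠ q → x j q' = 0 := by
    intro j q q' hx1 hne
    rcases hx01 j q' with h | h
    · exact h
    · exfalso
      have hle : ∑ p ∈ ({q, q'} : Finset (Fin n)), x j p ≤ ∑ p, x j p :=
        Finset.sum_le_sum_of_subset_of_nonneg (Finset.subset_univ _)
          (fun p _ _ => by rcases hx01 j p with h0 | h0 <;> simp [h0])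
      rw [Finset.sum_pair (Ne.symm hne), hx1, h, hrow j] at hle
      norm_num at hle
  have hmain : ∀ i j p q, i ≠ j → p ≠ q → y i j p q = x i p * x j q := by
    intro i j p q hij hpq
    rcases hx01 i p with hxi | hxi
    · rw [hxi, zero_mul]
      exact hzero i j p q hij (Ne.symm hpq) hxi
    · rcases hx01 j q with hxj | hxj
      · rw [hxj, mul_zero]
        rw [hy3 i j p q hij hpq]
        exact hzero j i q p (Ne.symm hij) hpq hxj
      · rw [hxi, hxj, one_mul]
        have hsum := hy1 i j p hij
        rw [hxi] at hsum
        rw [← hsum]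
        symm
        apply Finset.sum_eq_single_of_mem
        · exact Finset.mem_filter.mpr ⟨Finset.mem_univ q, Ne.symm hpq⟩
        · intro q' hq' hne
          have hq'p : q' ≠ p := (Finset.mem_filter.mp hq').2
          have : x j q' = 0 := hone j q q' hxj hne
          rw [hy3 i j p q' hij (Ne.symm hq'p)]
          exact hzero j i q' p (Ne.symm hij) (Ne.symm hq'p) this
  refine ⟨hmain, ?_⟩
  intro b C
  congr 1
  apply Finset.sum_congr rfl
  intro i _
  apply Finset.sum_congr rfl
  intro j hj
  apply Finset.sum_congr rfl
  intro p _
  apply Finset.sum_congr rfl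
  intro q hq
  rw [hmain i j p q (Ne.symm (Finset.mem_filter.mp hj).2) (Ne.symm (Finset.mem_filter.mp hq).2)]
end

section
/- Let n ≥ 1 and let x : Fin n → Fin n → ℝ take values in {0,1} and satisfy the assignment constraints ∑_p x i p = 1 for all i and ∑_i x i p = 1 for all p. Suppose y satisfies the RLT1 constraints (∑_{q ≠ p} y i j p q = x i p for all (i ≠ j, p); ∑_{j ≠ i} y i j p q = x i p for all (i, p ≠ q); y i j p q = y j i q p; y ≥ 0) and z satisfies the RLT2 constraints: ∑_{r ≠ p, r ≠ q} z i j k p q r = y i j p q for all pairwise distinct i, j, k and all p ≠ q; ∑_{k ≠ i, k ≠ j} z i j k p q r = y i j p q for all i ≠ j and all pairwise distinct p, q, r; z i j k p q r = z i k j p r q = z j i k q p r = z j k i q r p = z k i j r p q = z k j i r q p; and z ≥ 0. Then z i j k p q r = x i p * x j q * x k r for all pairwise distinct i, j, k and pairwise distinct p, q, r; in particular, for any cost data the RLT2 objective value of (x, y, z) equals the QAP objective value of x. -/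
open Finset

set_option maxHeartbeats 1000000

/-- If `x` is a binary assignment matrix, `y` satisfies the RLT1
constraints, and `z` satisfies the RLT2 constraints, then
`z i j k p q r = x i p * x j q * x k r` for all pairwise distinct `i, j, k` and
pairwise distinct `p, q, r`; in particular, for any cost data the RLT2 objective of
`(x, y, z)` equals the QAP objective of `x`. -/
theorem qap_of_rlt2 (n : ℕ) (hn : 1 ≤ n) (x : Fin n → Fin n → ℝ)
    (hx01 : ∀ i p, x i p = 0 ∨ x i p = 1)
    (hrow : ∀ i, ∑ p, x i p = 1)
    (hcol : ∀ p, ∑ i, x i p = 1)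
    (y : Fin n → Fin n → Fin n → Fin n → ℝ)
    (hy1 : ∀ i j p, i ≠ j →
      ∑ q ∈ univ.filter (fun q => q ≠ p), y i j p q = x i p)
    (hy2 : ∀ i p q, p ≠ q →
      ∑ j ∈ univ.filter (fun j => j ≠ i), y i j p q = x i p)
    (hy3 : ∀ i j p q, i ≠ j → p ≠ q → y i j p q = y j i q p)
    (hy4 : ∀ i j p q, i ≠ j → p ≠ q → 0 ≤ y i j p q)
    (z : Fin n → Fin n → Fin n → Fin n → Fin n → Fin n → ℝ)
    (hz1 : ∀ i j k p q, i ≠ j → i ≠ k → j ≠ k → p ≠ q →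
      ∑ r ∈ univ.filter (fun r => r ≠ p ∧ r ≠ q), z i j k p q r = y i j p q)
    (hz2 : ∀ i j p q r, i ≠ j → p ≠ q → p ≠ r → q ≠ r →
      ∑ k ∈ univ.filter (fun k => k ≠ i ∧ k ≠ j), z i j k p q r = y i j p q)
    (hz3 : ∀ i j k p q r, i ≠ j → i ≠ k → j ≠ k → p ≠ q → p ≠ r → q ≠ r →
      z i j k p q r = z i k j p r q ∧ z i j k p q r = z j i k q p r ∧
      z i j k p q r = z j k i q r p ∧ z i j k p q r = z k i j r p q ∧
      z i j k p q r = z k j i r q p)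
    (hz4 : ∀ i j k p q r, i ≠ j → i ≠ k → j ≠ k → p ≠ q → p ≠ r → q ≠ r →
      0 ≤ z i j k p q r) :
    (∀ i j k p q r, i ≠ j → i ≠ k → j ≠ k → p ≠ q → p ≠ r → q ≠ r →
      z i j k p q r = x i p * x j q * x k r) ∧
    (∀ (b : Fin n → Fin n → ℝ) (C : Fin n → Fin n → Fin n → Fin n → ℝ)
        (D : Fin n → Fin n → Fin n → Fin n → Fin n → Fin n → ℝ),
      (∑ i, ∑ p, b i p * x i p)
        + (∑ i, ∑ j ∈ univ.filter (fun j => j ≠ i),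
            ∑ p, ∑ q ∈ univ.filter (fun q => q ≠ p), C i j p q * y i j p q)
        + (∑ i, ∑ j ∈ univ.filter (fun j => j ≠ i),
            ∑ k ∈ univ.filter (fun k => k ≠ i ∧ k ≠ j),
            ∑ p, ∑ q ∈ univ.filter (fun q => q ≠ p),
            ∑ r ∈ univ.filter (fun r => r ≠ p ∧ r ≠ q),
              D i j k p q r * z i j k p q r)
      = (∑ i, ∑ p, b i p * x i p)
        + (∑ i, ∑ j ∈ univ.filter (fun j => j ≠ i),
            ∑ p, ∑ q ∈ univ.filter (fun q => q ≠ p),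
              C i j p q * (x i p * x j q))
        + (∑ i, ∑ j ∈ univ.filter (fun j => j ≠ i),
            ∑ k ∈ univ.filter (fun k => k ≠ i ∧ k ≠ j),
            ∑ p, ∑ q ∈ univ.filter (fun q => q ≠ p),
            ∑ r ∈ univ.filter (fun r => r ≠ p ∧ r ≠ q),
              D i j k p q r * (x i p * x j q * x k r))) := by

  -- nonnegativity of x
  have hx0le : ∀ i p, 0 ≤ x i p := by
    intro i p; rcases hx01 i p with h | h <;> simp [h]
  -- uniqueness of the 1 in each column
  have hcol_uniq : ∀ j j' q, x j q = 1 → x j' q = 1 → j = j' := by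
    intro j j' q h h'
    by_contra hne
    have hsub : ({j, j'} : Finset (Fin n)) ⊆ univ := subset_univ _
    have h2 := Finset.sum_le_sum_of_subset_of_nonneg hsub
      (fun i _ _ => hx0le i q)
    rw [Finset.sum_pair hne, h, h', hcol q] at h2
    linarith
  -- uniqueness of the 1 in each row
  have hrow_zero : ∀ i p q, p ≠ q → x i p = 1 → x i q = 0 := by
    intro i p q hpq h
    rcases hx01 i q with h' | h'
    · exact h'
    · exfalso
      have hsub : ({p, q} : Finset (Fin n)) ⊆ univ := subset_univ _
      have h2 := Finset.sum_le_sum_of_subset_of_nonneg hsub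
        (fun r _ _ => hx0le i r)
      rw [Finset.sum_pair hpq, h, h', hrow i] at h2
      linarith
  -- if x i p = 0 then y i j p q = 0
  have hy_zero1 : ∀ i j p q, i ≠ j → p ≠ q → x i p = 0 → y i j p q = 0 := by
    intro i j p q hij hpq hx
    have hsum := hy1 i j p hij
    rw [hx] at hsum
    have hnn : ∀ q' ∈ univ.filter (fun q' => q' ≠ p), 0 ≤ y i j p q' := by
      intro q' hq'
      simp only [mem_filter, mem_univ, true_and] at hq'
      exact hy4 i j p q' hij (Ne.symm hq')
    have := (Finset.sum_eq_zero_iff_of_nonneg hnn).mp hsum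
    exact this q (by simp [hpq.symm])
  have hy_zero2 : ∀ i j p q, i ≠ j → p ≠ q → x j q = 0 → y i j p q = 0 := by
    intro i j p q hij hpq hx
    rw [hy3 i j p q hij hpq]
    exact hy_zero1 j i q p hij.symm hpq.symm hx
  -- the key RLT1 identity
  have hxy : ∀ i j p q, i ≠ j → p ≠ q → y i j p q = x i p * x j q := by
    intro i j p q hij hpq
    rcases hx01 i p with hip | hip
    · rw [hip, zero_mul]; exact hy_zero1 i j p q hij hpq hip
    rcases hx01 j q with hjq | hjq
    · rw [hjq, mul_zero]; exact hy_zero2 i j p q hij hpq hjq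
    rw [hip, hjq, one_mul]
    have hsum := hy2 i p q hpq
    rw [hip] at hsum
    rw [← hsum]
    symm
    apply Finset.sum_eq_single_of_mem
    · simp [hij.symm]
    · intro j' hj' hjj
      simp only [mem_filter, mem_univ, true_and] at hj'
      have : x j' q = 0 := by
        rcases hx01 j' q with h | h
        · exact h
        · exact absurd (hcol_uniq j' j q h hjq) hjj
      exact hy_zero2 i j' p q (Ne.symm hj') hpq this
  -- if y i j p q = 0 then z i j k p q r = 0
  have hz_zero : ∀ i j k p q r, i ≠ j → i ≠ k → j ≠ k → p ≠ q → p ≠ r → q ≠ r →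
      y i j p q = 0 → z i j k p q r = 0 := by
    intro i j k p q r hij hik hjk hpq hpr hqr hy0
    have hsum := hz1 i j k p q hij hik hjk hpq
    rw [hy0] at hsum
    have hnn : ∀ r' ∈ univ.filter (fun r' => r' ≠ p ∧ r' ≠ q),
        0 ≤ z i j k p q r' := by
      intro r' hr'
      simp only [mem_filter, mem_univ, true_and] at hr'
      exact hz4 i j k p q r' hij hik hjk hpq (Ne.symm hr'.1) (Ne.symm hr'.2)
    have := (Finset.sum_eq_zero_iff_of_nonneg hnn).mp hsum
    exact this r (by simp [hpr.symm, hqr.symm])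
  -- the key RLT2 identity
  have hz_eq : ∀ i j k p q r, i ≠ j → i ≠ k → j ≠ k → p ≠ q → p ≠ r → q ≠ r →
      z i j k p q r = x i p * x j q * x k r := by
    intro i j k p q r hij hik hjk hpq hpr hqr
    rcases hx01 i p with hip | hip
    · rw [hip, zero_mul, zero_mul]
      exact hz_zero i j k p q r hij hik hjk hpq hpr hqr
        (by rw [hxy i j p q hij hpq, hip, zero_mul])
    rcases hx01 j q with hjq | hjq
    · rw [hjq, mul_zero, zero_mul]
      rw [(hz3 i j k p q r hij hik hjk hpq hpr hqr).2.1]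
      exact hz_zero j i k q p r hij.symm hjk hik hpq.symm hqr hpr
        (by rw [hxy j i q p hij.symm hpq.symm, hjq, zero_mul])
    rcases hx01 k r with hkr | hkr
    · rw [hkr, mul_zero]
      rw [(hz3 i j k p q r hij hik hjk hpq hpr hqr).2.2.2.1]
      exact hz_zero k i j r p q hik.symm hjk.symm hij hpr.symm hqr.symm hpq
        (by rw [hxy k i r p hik.symm hpr.symm, hkr, zero_mul])
    rw [hip, hjq, hkr]
    norm_num
    have hsum := hz2 i j p q r hij hpq hpr hqr
    rw [hxy i j p q hij hpq, hip, hjq, one_mul] at hsum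
    rw [← hsum]
    symm
    apply Finset.sum_eq_single_of_mem
    · simp [hik.symm, hjk.symm]
    · intro k' hk' hkk
      simp only [mem_filter, mem_univ, true_and] at hk'
      have hk'r : x k' r = 0 := by
        rcases hx01 k' r with h | h
        · exact h
        · exact absurd (hcol_uniq k' k r h hkr) hkk
      rw [(hz3 i j k' p q r hij (Ne.symm hk'.1) (Ne.symm hk'.2) hpq hpr hqr).2.2.2.1]
      exact hz_zero k' i j r p q hk'.1 hk'.2 hij hpr.symm hqr.symm hpq
        (by rw [hxy k' i r p hk'.1 hpr.symm, hk'r, zero_mul])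
  refine ⟨hz_eq, fun b C D => ?_⟩
  congr 1
  · congr 1
    apply Finset.sum_congr rfl; intro i _
    apply Finset.sum_congr rfl; intro j hj
    apply Finset.sum_congr rfl; intro p _
    apply Finset.sum_congr rfl; intro q hq
    simp only [mem_filter, mem_univ, true_and] at hj hq
    rw [hxy i j p q (Ne.symm hj) (Ne.symm hq)]
  · apply Finset.sum_congr rfl; intro i _
    apply Finset.sum_congr rfl; intro j hj
    apply Finset.sum_congr rfl; intro k hk
    apply Finset.sum_congr rfl; intro p _
    apply Finset.sum_congr rfl; intro q hq
    apply Finset.sum_congr rfl; intro r hr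
    simp only [mem_filter, mem_univ, true_and] at hj hk hq hr
    rw [hz_eq i j k p q r (Ne.symm hj) (Ne.symm hk.1) (Ne.symm hk.2)
      (Ne.symm hq) (Ne.symm hr.1) (Ne.symm hr.2)]
end

section
/- Let n ≥ 1 and fix cost data b : Fin n → Fin n → ℝ and Ĉ : Fin n → Fin n → Fin n → Fin n → ℝ. For each pair (i, p), suppose there exist γ* (i, ·, p) and δ* (i, p, ·) attaining the inner optimum Δ i p := ∑_{j ≠ i} γ* i j p + ∑_{q ≠ p} δ* i p q, where (γ*, δ*) is feasible (γ* i j p + δ* i p q ≤ Ĉ i j p q for all j ≠ i, q ≠ p) and its objective dominates that of every other feasible (γ, δ) for the same (i, p). Then the optimal value of the nested dual problem sup { ∑_i α i + ∑_p β p : α i + β p - ∑_{j ≠ i} γ i j p - ∑_{q ≠ p} δ i p q ≤ b i p for all i, p; γ i j p + δ i p q ≤ Ĉ i j p q for all i ≠ j, p ≠ q } equals the optimal value of the single adjusted problem sup { ∑_i α i + ∑_p β p : α i + β p ≤ b i p + Δ i p for all i, p } (both taken as suprema of the respective sets of objective values in ℝ). -/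
open Finset

/-- Decomposition principle for the nested dual problem. If for each
pair `(i, p)` the inner LAP-dual subproblem is attained by `(γ* i · p, δ* i p ·)`
with optimal value `Δ i p`, then the optimal value of the nested dual linear program
equals the optimal value of the single adjusted problem with costs `b i p + Δ i p`. -/
theorem nested_dual_decomposition (n : ℕ) (hn : 1 ≤ n)
    (b : Fin n → Fin n → ℝ) (Chat : Fin n → Fin n → Fin n → Fin n → ℝ)
    (γstar δstar : Fin n → Fin n → Fin n → ℝ) (Δ : Fin n → Fin n → ℝ)
    (hΔ : ∀ i p, Δ i p =
      (∑ j ∈ univ.filter (fun j => j ≠ i), γstar i j p)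
        + ∑ q ∈ univ.filter (fun q => q ≠ p), δstar i p q)
    (hfeas : ∀ i p j q, j ≠ i → q ≠ p → γstar i j p + δstar i p q ≤ Chat i j p q)
    (hopt : ∀ i p (γ δ : Fin n → ℝ),
      (∀ j q, j ≠ i → q ≠ p → γ j + δ q ≤ Chat i j p q) →
      (∑ j ∈ univ.filter (fun j => j ≠ i), γ j)
        + (∑ q ∈ univ.filter (fun q => q ≠ p), δ q) ≤ Δ i p) :
    sSup {t : ℝ | ∃ (α β : Fin n → ℝ) (γ δ : Fin n → Fin n → Fin n → ℝ),
        (∀ i p, α i + β p - (∑ j ∈ univ.filter (fun j => j ≠ i), γ i j p)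
          - (∑ q ∈ univ.filter (fun q => q ≠ p), δ i p q) ≤ b i p) ∧
        (∀ i j p q, i ≠ j → p ≠ q → γ i j p + δ i p q ≤ Chat i j p q) ∧
        t = (∑ i, α i) + ∑ p, β p}
      = sSup {t : ℝ | ∃ (α β : Fin n → ℝ),
        (∀ i p, α i + β p ≤ b i p + Δ i p) ∧
        t = (∑ i, α i) + ∑ p, β p} := by
  congr 1
  ext t
  constructor
  · rintro ⟨α, β, γ, δ, h1, h2, rfl⟩
    refine ⟨α, β, fun i p => ?_, rfl⟩
    have h3 := hopt i p (fun j => γ i j p) (fun q => δ i p q)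
      (fun j q hj hq => h2 i j p q hj.symm hq.symm)
    have := h1 i p
    linarith
  · rintro ⟨α, β, h1, rfl⟩
    refine ⟨α, β, γstar, δstar, fun i p => ?_,
      fun i j p q hij hpq => hfeas i p j q hij.symm hpq.symm, rfl⟩
    have := h1 i p
    have := hΔ i p
    linarith
end
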